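/- In the discrete stochastic SIR model, for every k ∈ ℕ the conditional covariance of the numbers of susceptible and infectious individuals after one step satisfies, almost surely: Cov(S_{k+1}, I_{k+1} | 𝓕_k) = −S_k·(1 − e^{−λ I_k h})·e^{−λ I_k h}, where Cov(Z, W | 𝓕_k) := 𝔼[ZW | 𝓕_k] − 𝔼[Z | 𝓕_k]·𝔼[W | 𝓕_k]. In particular |Cov(S_{k+1}, I_{k+1} | 𝓕_k)| ≤ λ N² h almost surely. -/

import Mathlib

open MeasureTheory ProbabilityTheory Filter Real

/-- The filtration `𝓕_k = σ((S_j, I_j) : j ≤ k)` generated by the susceptible and infectious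
counts up to time `k`. -/
def sirFiltration {Ω : Type*} (S I : ℕ → Ω → ℕ) (k : ℕ) : MeasurableSpace Ω :=
  ⨆ j ∈ Finset.range (k + 1),
    MeasurableSpace.comap (fun ω => (S j ω, I j ω)) inferInstance

/-- The discrete stochastic SIR model on one node with total population `N`, time step `h > 0`
and parameters `λ ≥ 0` (infection), `γ > 0` (recovery).  `S, I, R` are the susceptible,
infectious and recovered counts; `X k i` and `Y k i` are the `{0,1}`-valued infection and
recovery indicators used in the step from time `k` to `k+1`.  Conditionally on
`𝓕_k = σ((S_j, I_j) : j ≤ k)`, the combined family `(X k i)_i, (Y k i)_i` is independent,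
each `X k i` being Bernoulli of parameter `1 - e^{-λ I_k h}` and each `Y k i` Bernoulli of
parameter `1 - e^{-γ h}`; this is expressed by the product form of the conditional
probability of every joint configuration of values.  The initial values are deterministic. -/
def IsSIRModel {Ω : Type*} [MeasurableSpace Ω] (μ : Measure Ω)
    (N : ℕ) (h lam gam : ℝ)
    (S I R : ℕ → Ω → ℕ) (X Y : ℕ → ℕ → Ω → ℕ) : Prop :=
  IsProbabilityMeasure μ ∧
  0 < h ∧ 0 ≤ lam ∧ 0 < gam ∧
  (∀ k ω, S k ω + I k ω + R k ω = N) ∧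
  (∀ k i ω, X k i ω ≤ 1) ∧
  (∀ k i ω, Y k i ω ≤ 1) ∧
  (∀ k, Measurable (S k)) ∧ (∀ k, Measurable (I k)) ∧ (∀ k, Measurable (R k)) ∧
  (∀ k i, Measurable (X k i)) ∧ (∀ k i, Measurable (Y k i)) ∧
  (∀ ω ω', S 0 ω = S 0 ω' ∧ I 0 ω = I 0 ω' ∧ R 0 ω = R 0 ω') ∧
  (∀ k ω, S (k + 1) ω + (∑ i ∈ Finset.range (S k ω), X k i ω) = S k ω) ∧
  (∀ k ω, I (k + 1) ω + (∑ i ∈ Finset.range (I k ω), Y k i ω)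
      = I k ω + ∑ i ∈ Finset.range (S k ω), X k i ω) ∧
  (∀ k ω, R (k + 1) ω = R k ω + ∑ i ∈ Finset.range (I k ω), Y k i ω) ∧
  (∀ k : ℕ, ∀ a b : ℕ → ℕ, (∀ i, a i ≤ 1) → (∀ i, b i ≤ 1) →
    μ[Set.indicator {ω | ∀ i < N, X k i ω = a i ∧ Y k i ω = b i} (fun _ => (1 : ℝ))
        | sirFiltration S I k]
      =ᵐ[μ] fun ω =>
        (∏ i ∈ Finset.range N,
          (if a i = 1 then 1 - exp (-(lam * (I k ω : ℝ) * h))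
            else exp (-(lam * (I k ω : ℝ) * h)))) *
        (∏ i ∈ Finset.range N,
          (if b i = 1 then 1 - exp (-(gam * h)) else exp (-(gam * h)))))

open Finset

/-! Conditionally on `𝓕_k`, one step of the model is driven by the Boolean vectors of infection
and recovery indicators, whose conditional law is the product of Bernoulli laws of parameters
`p = 1 - e^{-λ I_k h}` and `r = 1 - e^{-γ h}`. Hence the conditional expectation of any function of
these vectors and of `(S_k, I_k)` is a finite sum against the product weights. With
`A = ∑_{i < S_k} X_i` and `B = ∑_{j < I_k} Y_j` we have `S_{k+1} = S_k - A` and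
`I_{k+1} = I_k + A - B`, so the conditional covariance is `-Var(A) + Cov(A, B) = -S_k p (1 - p)`,
the covariance vanishing by independence. The bound follows from `1 - e^{-x} ≤ x`. -/

section CondExpFinite

variable {Ω α β : Type*} {m m₀ : MeasurableSpace Ω} {μ : Measure Ω} [IsFiniteMeasure μ]
  [Fintype α] [MeasurableSpace β] [Countable β] [MeasurableSingletonClass β]

theorem condExp_comp_eq_sum (hm : m ≤ m₀) {Z : Ω → α}
    (hZ : ∀ a, MeasurableSet[m₀] (Z ⁻¹' {a})) {q : α → Ω → ℝ}
    (hq : ∀ a, μ[(Z ⁻¹' {a}).indicator 1 | m] =ᵐ[μ] q a) {V : Ω → β} (hV : Measurable[m] V)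
    (T : Finset β) (hVT : ∀ ω, V ω ∈ T) (φ : α → β → ℝ) :
    μ[fun ω => φ (Z ω) (V ω) | m] =ᵐ[μ] fun ω => ∑ a, φ a (V ω) * q a ω := by
  classical
  have hφV : ∀ a, StronglyMeasurable[m] fun ω => φ a (V ω) := fun a =>
    ((measurable_of_countable (φ a)).comp hV).stronglyMeasurable
  have hφV_int : ∀ a, Integrable (fun ω => φ a (V ω)) μ := fun a =>
    .of_bound ((hφV a).mono hm).aestronglyMeasurable (∑ b ∈ T, ‖φ a b‖)
      (ae_of_all _ fun ω => single_le_sum (f := fun b => ‖φ a b‖)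
        (fun _ _ => norm_nonneg _) (hVT ω))
  have hprod_int : ∀ a, Integrable ((fun ω => φ a (V ω)) * (Z ⁻¹' {a}).indicator 1) μ :=
    fun a => ((hφV_int a).indicator (hZ a)).congr (ae_of_all _ fun ω => by
      simp [Set.indicator_apply])
  have hpull : ∀ a, μ[(fun ω => φ a (V ω)) * (Z ⁻¹' {a}).indicator 1 | m]
      =ᵐ[μ] (fun ω => φ a (V ω)) * μ[(Z ⁻¹' {a}).indicator 1 | m] := fun a =>
    condExp_mul_of_stronglyMeasurable_left (hφV a) (hprod_int a)
      ((integrable_const 1).indicator (hZ a))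
  have hsplit : (fun ω => φ (Z ω) (V ω))
      = ∑ a, (fun ω => φ a (V ω)) * (Z ⁻¹' {a}).indicator 1 := by
    ext ω
    simp [Finset.sum_apply, Set.indicator_apply, eq_comm]
  rw [hsplit]
  filter_upwards [condExp_finsetSum (fun a _ => hprod_int a) m, ae_all_iff.2 hpull,
    ae_all_iff.2 hq] with ω hsum hpull hq
  rw [hsum, Finset.sum_apply]
  exact sum_congr rfl fun a _ => by rw [hpull a, Pi.mul_apply, hq a]

end CondExpFinite

theorem sum_mul_affine {α : Type*} [Fintype α] (w f : α → ℝ) (c₀ c₁ : ℝ) :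
    ∑ x, w x * (c₀ + c₁ * f x) = c₀ * ∑ x, w x + c₁ * ∑ x, w x * f x := by
  simp only [mul_add, sum_add_distrib, mul_sum]
  congr 1
  all_goals exact sum_congr rfl fun x _ => by ring

theorem sum_mul_quadratic {α : Type*} [Fintype α] (w f : α → ℝ) (c₀ c₁ c₂ : ℝ) :
    ∑ x, w x * (c₀ + c₁ * f x + c₂ * f x ^ 2)
      = c₀ * ∑ x, w x + c₁ * ∑ x, w x * f x + c₂ * ∑ x, w x * f x ^ 2 := by
  simp only [mul_add, sum_add_distrib, mul_sum]
  congr 1; congr 1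
  all_goals exact sum_congr rfl fun x _ => by ring

section BernoulliWeight

variable {ι κ : Type*} [Fintype ι] [Fintype κ] (p r : ℝ)

def bernoulliWeight (x : ι → Bool) : ℝ := ∏ i, if x i then p else 1 - p

def boolCount (T : Finset ι) (x : ι → Bool) : ℝ := ∑ i ∈ T, if x i then 1 else 0

variable [DecidableEq ι] [DecidableEq κ]

theorem sum_bernoulliWeight_mul_prod (T : Finset ι) :
    ∑ x, bernoulliWeight p x * ∏ i ∈ T, (if x i then (1 : ℝ) else 0) = p ^ #T := calc
  _ = ∑ x : ι → Bool, ∏ i,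
        (if x i then p else 1 - p) * if i ∈ T then (if x i then 1 else 0) else 1 := by
      simp only [bernoulliWeight, prod_mul_distrib, prod_ite_mem, univ_inter]
  _ = ∏ i, ∑ b : Bool, (if b then p else 1 - p) * if i ∈ T then (if b then 1 else 0) else 1 := by
      rw [Fintype.prod_sum]
  _ = ∏ i, if i ∈ T then p else 1 := by
      refine prod_congr rfl fun i _ => ?_
      split_ifs <;> simp
  _ = p ^ #T := by simp [prod_ite_mem]

theorem sum_bernoulliWeight : ∑ x : ι → Bool, bernoulliWeight p x = 1 := by
  simpa using sum_bernoulliWeight_mul_prod p (∅ : Finset ι)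

theorem sum_bernoulliWeight_mul_ite (i : ι) :
    ∑ x, bernoulliWeight p x * (if x i then (1 : ℝ) else 0) = p := by
  simpa using sum_bernoulliWeight_mul_prod p {i}

theorem sum_bernoulliWeight_mul_ite_mul_ite (i j : ι) :
    ∑ x, bernoulliWeight p x * ((if x i then (1 : ℝ) else 0) * if x j then 1 else 0)
      = if i = j then p else p ^ 2 := by
  split_ifs with hij
  · subst hij
    simpa [← ite_and] using sum_bernoulliWeight_mul_prod p {i}
  · simpa [prod_pair hij, card_pair hij] using sum_bernoulliWeight_mul_prod p {i, j}

theorem sum_bernoulliWeight_mul_boolCount (T : Finset ι) :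
    ∑ x, bernoulliWeight p x * boolCount T x = #T * p := by
  simp_rw [boolCount, mul_sum]
  rw [sum_comm, sum_congr rfl fun i _ => sum_bernoulliWeight_mul_ite p i]
  simp

theorem sum_bernoulliWeight_mul_boolCount_sq (T : Finset ι) :
    ∑ x, bernoulliWeight p x * boolCount T x ^ 2 = (#T * p) ^ 2 + #T * (p * (1 - p)) := calc
  _ = ∑ i ∈ T, ∑ j ∈ T, ∑ x, bernoulliWeight p x *
        ((if x i then (1 : ℝ) else 0) * if x j then 1 else 0) := by
      simp_rw [boolCount, sq, sum_mul_sum, mul_sum]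
      rw [sum_comm]
      exact sum_congr rfl fun i _ => sum_comm
  _ = ∑ i ∈ T, ∑ j ∈ T, (p ^ 2 + if i = j then p * (1 - p) else 0) := by
      simp_rw [sum_bernoulliWeight_mul_ite_mul_ite]
      refine sum_congr rfl fun i _ => sum_congr rfl fun j _ => ?_
      split_ifs <;> ring
  _ = (#T * p) ^ 2 + #T * (p * (1 - p)) := by
      simp [sum_add_distrib, sum_ite_eq]
      ring

theorem sum_poly_mul_bernoulliWeight_prod (T : Finset ι) (U : Finset κ) (c₀ c₁ c₂ c₃ c₄ : ℝ) :
    ∑ z : (ι → Bool) × (κ → Bool),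
        (c₀ + c₁ * boolCount T z.1 + c₂ * boolCount T z.1 ^ 2 + c₃ * boolCount U z.2
          + c₄ * (boolCount T z.1 * boolCount U z.2))
        * (bernoulliWeight p z.1 * bernoulliWeight r z.2)
      = c₀ + c₁ * (#T * p) + c₂ * ((#T * p) ^ 2 + #T * (p * (1 - p))) + c₃ * (#U * r)
          + c₄ * (#T * p * (#U * r)) := calc
  _ = ∑ x, bernoulliWeight p x * ((c₀ + c₃ * (#U * r)) + (c₁ + c₄ * (#U * r)) * boolCount T x
        + c₂ * boolCount T x ^ 2) := by
      rw [Fintype.sum_prod_type]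
      refine sum_congr rfl fun x _ => ?_
      calc _ = bernoulliWeight p x * ∑ y, bernoulliWeight r y *
            ((c₀ + c₁ * boolCount T x + c₂ * boolCount T x ^ 2)
              + (c₃ + c₄ * boolCount T x) * boolCount U y) := by
            rw [mul_sum]
            exact sum_congr rfl fun y _ => by ring
        _ = _ := by
            rw [sum_mul_affine, sum_bernoulliWeight, sum_bernoulliWeight_mul_boolCount]
            ring
  _ = _ := by
      rw [sum_mul_quadratic, sum_bernoulliWeight, sum_bernoulliWeight_mul_boolCount,
        sum_bernoulliWeight_mul_boolCount_sq]
      ring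

theorem sum_bernoulliWeight_prod_cov (a b : ℝ) (T : Finset ι) (U : Finset κ) :
    ∑ z : (ι → Bool) × (κ → Bool), (a - boolCount T z.1) * (b + boolCount T z.1 - boolCount U z.2)
        * (bernoulliWeight p z.1 * bernoulliWeight r z.2)
      - (∑ z : (ι → Bool) × (κ → Bool), (a - boolCount T z.1)
          * (bernoulliWeight p z.1 * bernoulliWeight r z.2))
        * ∑ z : (ι → Bool) × (κ → Bool), (b + boolCount T z.1 - boolCount U z.2)
          * (bernoulliWeight p z.1 * bernoulliWeight r z.2)
      = -(#T * (p * (1 - p))) := by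
  have moments := sum_poly_mul_bernoulliWeight_prod p r T U
  calc _ = (a * b + (a - b) * (#T * p) - ((#T * p) ^ 2 + #T * (p * (1 - p))) - a * (#U * r)
          + #T * p * (#U * r)) - (a - #T * p) * (b + #T * p - #U * r) := by
        congr 1
        · exact (sum_congr rfl fun z _ => by ring).trans
            ((moments (a * b) (a - b) (-1) (-a) 1).trans (by ring))
        congr 1
        · exact (sum_congr rfl fun z _ => by ring).trans ((moments a (-1) 0 0 0).trans (by ring))
        · exact (sum_congr rfl fun z _ => by ring).trans ((moments b 1 0 (-1) 0).trans (by ring))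
    _ = _ := by ring

end BernoulliWeight

theorem abs_neg_mul_one_sub_exp_neg_mul_exp_neg_le {s x : ℝ} (hs : 0 ≤ s) (hx : 0 ≤ x) :
    |-(s * (1 - exp (-x)) * exp (-x))| ≤ s * x := by
  have hexp_le : exp (-x) ≤ 1 := exp_le_one_iff.mpr (by linarith)
  have hlin : 1 - exp (-x) ≤ x := by linarith [add_one_le_exp (-x)]
  rw [abs_neg, abs_of_nonneg (by positivity)]
  calc s * (1 - exp (-x)) * exp (-x) ≤ s * (1 - exp (-x)) * 1 := by gcongr
    _ ≤ s * x := by rw [mul_one]; gcongr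

section SIRStep

variable {Ω : Type*}

def stepConfig (N : ℕ) (X Y : ℕ → Ω → ℕ) (ω : Ω) : (Fin N → Bool) × (Fin N → Bool) :=
  (fun i => X i ω = 1, fun i => Y i ω = 1)

def natOfBoolVec {N : ℕ} (x : Fin N → Bool) (i : ℕ) : ℕ :=
  if hi : i < N then (x ⟨i, hi⟩).toNat else 0

def sirStep (N : ℕ) (z : (Fin N → Bool) × (Fin N → Bool)) (v : ℕ × ℕ) : ℝ × ℝ :=
  (v.1 - boolCount {i : Fin N | (i : ℕ) < v.1} z.1,
    v.2 + boolCount {i : Fin N | (i : ℕ) < v.1} z.1 - boolCount {i : Fin N | (i : ℕ) < v.2} z.2)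

theorem decide_eq_one_eq_iff_eq_toNat {n : ℕ} (hn : n ≤ 1) (b : Bool) :
    decide (n = 1) = b ↔ n = b.toNat := by
  cases b <;> simp; omega

theorem preimage_stepConfig {N : ℕ} {X Y : ℕ → Ω → ℕ} (hX : ∀ i ω, X i ω ≤ 1)
    (hY : ∀ i ω, Y i ω ≤ 1) (z : (Fin N → Bool) × (Fin N → Bool)) :
    stepConfig N X Y ⁻¹' {z}
      = {ω | ∀ i < N, X i ω = natOfBoolVec z.1 i ∧ Y i ω = natOfBoolVec z.2 i} := by
  ext ω
  simp only [Set.mem_preimage, Set.mem_singleton_iff, stepConfig, Prod.ext_iff, funext_iff,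
    decide_eq_one_eq_iff_eq_toNat (hX _ ω), decide_eq_one_eq_iff_eq_toNat (hY _ ω),
    Set.mem_ofPred_eq, Fin.forall_iff, natOfBoolVec]
  exact ⟨fun h i hi => by simp [hi, h.1 i hi, h.2 i hi], fun h =>
    ⟨fun i hi => by simpa [hi] using (h i hi).1, fun i hi => by simpa [hi] using (h i hi).2⟩⟩

theorem prod_range_natOfBoolVec {N : ℕ} (x : Fin N → Bool) (q : ℝ) :
    ∏ i ∈ range N, (if natOfBoolVec x i = 1 then 1 - q else q) = bernoulliWeight (1 - q) x := by
  rw [prod_range, bernoulliWeight]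
  refine prod_congr rfl fun i _ => ?_
  cases hx : x i <;> simp [natOfBoolVec, hx]

theorem natOfBoolVec_le_one {N : ℕ} (x : Fin N → Bool) (i : ℕ) : natOfBoolVec x i ≤ 1 := by
  unfold natOfBoolVec
  split_ifs <;> simp [Bool.toNat_le]

theorem cast_sum_range_eq_boolCount {N s : ℕ} (hs : s ≤ N) {x : ℕ → ℕ} (hx : ∀ i, x i ≤ 1) :
    ((∑ i ∈ range s, x i : ℕ) : ℝ) = boolCount {i : Fin N | (i : ℕ) < s} (fun i => x i = 1) := by
  rw [boolCount, sum_filter, Fin.sum_univ_eq_sum_range (fun i => if i < s then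
    (if decide (x i = 1) then (1 : ℝ) else 0) else 0), ← sum_filter,
    show (range N).filter (· < s) = range s by ext; simp; omega]
  push_cast
  refine sum_congr rfl fun i _ => ?_
  rcases Nat.le_one_iff_eq_zero_or_eq_one.mp (hx i) with h | h <;> simp [h]

theorem measurable_pair_sirFiltration (S I : ℕ → Ω → ℕ) (k : ℕ) :
    Measurable[sirFiltration S I k] fun ω => (S k ω, I k ω) :=
  Measurable.of_comap_le (le_iSup₂_of_le k (self_mem_range_succ k) le_rfl)

theorem sirFiltration_le [MeasurableSpace Ω] {S I : ℕ → Ω → ℕ} (hS : ∀ j, Measurable (S j))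
    (hI : ∀ j, Measurable (I j)) (k : ℕ) : sirFiltration S I k ≤ ‹MeasurableSpace Ω› :=
  iSup₂_le fun j _ => ((hS j).prodMk (hI j)).comap_le

theorem measurable_stepConfig [MeasurableSpace Ω] {N : ℕ} {X Y : ℕ → Ω → ℕ}
    (hX : ∀ i, Measurable (X i)) (hY : ∀ i, Measurable (Y i)) :
    Measurable (stepConfig N X Y) :=
  (measurable_pi_lambda _ fun i : Fin N =>
      (measurable_of_countable fun n => decide (n = 1)).comp (hX i)).prodMk
    (measurable_pi_lambda _ fun i : Fin N =>
      (measurable_of_countable fun n => decide (n = 1)).comp (hY i))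

end SIRStep

namespace IsSIRModel

variable {Ω : Type*} [MeasurableSpace Ω] {μ : Measure Ω} {N : ℕ} {h lam gam : ℝ}
  {S I R : ℕ → Ω → ℕ} {X Y : ℕ → ℕ → Ω → ℕ}

theorem S_le (hM : IsSIRModel μ N h lam gam S I R X Y) (k : ℕ) (ω : Ω) : S k ω ≤ N := by
  have := hM.2.2.2.2.1 k ω
  omega

theorem I_le (hM : IsSIRModel μ N h lam gam S I R X Y) (k : ℕ) (ω : Ω) : I k ω ≤ N := by
  have := hM.2.2.2.2.1 k ω
  omega

theorem condExp_stepConfig (hM : IsSIRModel μ N h lam gam S I R X Y) (k : ℕ)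
    (φ : (Fin N → Bool) × (Fin N → Bool) → ℕ × ℕ → ℝ) :
    μ[fun ω => φ (stepConfig N (X k) (Y k) ω) (S k ω, I k ω) | sirFiltration S I k]
      =ᵐ[μ] fun ω => ∑ z, φ z (S k ω, I k ω) *
        (bernoulliWeight (1 - exp (-(lam * I k ω * h))) z.1
          * bernoulliWeight (1 - exp (-(gam * h))) z.2) := by
  have ⟨hprob, _, _, _, _, hX, hY, hSm, hIm, _, hXm, hYm, _, _, _, _, hcond⟩ := hM
  refine condExp_comp_eq_sum (sirFiltration_le hSm hIm k)
    (fun z => measurable_stepConfig (hXm k) (hYm k) (measurableSet_singleton z))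
    (fun z => ?_) (measurable_pair_sirFiltration S I k) (range (N + 1) ×ˢ range (N + 1))
    (fun ω => by simp [hM.S_le k ω, hM.I_le k ω]) φ
  rw [preimage_stepConfig (hX k) (hY k)]
  filter_upwards [hcond k _ _ (natOfBoolVec_le_one z.1) (natOfBoolVec_le_one z.2)] with ω hω
  exact hω.trans (by rw [prod_range_natOfBoolVec, prod_range_natOfBoolVec])

theorem sirStep_stepConfig (hM : IsSIRModel μ N h lam gam S I R X Y) (k : ℕ) (ω : Ω) :
    sirStep N (stepConfig N (X k) (Y k) ω) (S k ω, I k ω)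
      = ((S (k + 1) ω : ℝ), (I (k + 1) ω : ℝ)) := by
  have ⟨_, _, _, _, _, hX, hY, _, _, _, _, _, _, hSrec, hIrec, _⟩ := hM
  have hA := cast_sum_range_eq_boolCount (hM.S_le k ω) (x := fun i => X k i ω) (hX k · ω)
  have hB := cast_sum_range_eq_boolCount (hM.I_le k ω) (x := fun i => Y k i ω) (hY k · ω)
  have hS := congrArg (Nat.cast : ℕ → ℝ) (hSrec k ω)
  have hI := congrArg (Nat.cast : ℕ → ℝ) (hIrec k ω)
  push_cast at hS hI
  simp only [sirStep, stepConfig, Prod.mk.injEq, ← hA, ← hB]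
  push_cast
  constructor <;> linarith

theorem condCovariance_S_succ_I_succ (hM : IsSIRModel μ N h lam gam S I R X Y) (k : ℕ) :
    (fun ω => (μ[fun ω' => (S (k + 1) ω' : ℝ) * (I (k + 1) ω' : ℝ) | sirFiltration S I k]) ω
        - (μ[fun ω' => (S (k + 1) ω' : ℝ) | sirFiltration S I k]) ω
          * (μ[fun ω' => (I (k + 1) ω' : ℝ) | sirFiltration S I k]) ω)
      =ᵐ[μ] fun ω => -((S k ω : ℝ) * (1 - exp (-(lam * (I k ω : ℝ) * h)))
          * exp (-(lam * (I k ω : ℝ) * h))) := by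
  filter_upwards [hM.condExp_stepConfig k fun z v => (sirStep N z v).1 * (sirStep N z v).2,
    hM.condExp_stepConfig k fun z v => (sirStep N z v).1,
    hM.condExp_stepConfig k fun z v => (sirStep N z v).2] with ω hSI hS hI
  simp only [hM.sirStep_stepConfig k] at hSI hS hI
  rw [hSI, hS, hI]
  simp only [sirStep]
  rw [sum_bernoulliWeight_prod_cov, Fin.card_filter_val_lt, min_eq_right (hM.S_le k ω)]
  ring

end IsSIRModel

/-- In the discrete stochastic SIR model, for every `k`, the conditional
covariance `Cov(S_{k+1}, I_{k+1} | 𝓕_k) := 𝔼[S_{k+1} I_{k+1} | 𝓕_k]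
 - 𝔼[S_{k+1} | 𝓕_k] 𝔼[I_{k+1} | 𝓕_k]` equals `-S_k (1 - e^{-λ I_k h}) e^{-λ I_k h}` a.s.;
in particular its absolute value is a.s. bounded by `λ N² h`. -/
theorem sir_cond_covariance_one_step
    {Ω : Type*} [MeasurableSpace Ω] (μ : Measure Ω)
    (N : ℕ) (h lam gam : ℝ)
    (S I R : ℕ → Ω → ℕ) (X Y : ℕ → ℕ → Ω → ℕ)
    (hM : IsSIRModel μ N h lam gam S I R X Y) :
    ∀ k : ℕ,
      ((fun ω =>
          (μ[fun ω' => (S (k + 1) ω' : ℝ) * (I (k + 1) ω' : ℝ) | sirFiltration S I k]) ω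
            - (μ[fun ω' => (S (k + 1) ω' : ℝ) | sirFiltration S I k]) ω
              * (μ[fun ω' => (I (k + 1) ω' : ℝ) | sirFiltration S I k]) ω)
        =ᵐ[μ] fun ω =>
          -((S k ω : ℝ) * (1 - Real.exp (-(lam * (I k ω : ℝ) * h)))
              * Real.exp (-(lam * (I k ω : ℝ) * h)))) ∧
      (∀ᵐ ω ∂μ,
        |(μ[fun ω' => (S (k + 1) ω' : ℝ) * (I (k + 1) ω' : ℝ) | sirFiltration S I k]) ω
            - (μ[fun ω' => (S (k + 1) ω' : ℝ) | sirFiltration S I k]) ω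
              * (μ[fun ω' => (I (k + 1) ω' : ℝ) | sirFiltration S I k]) ω|
          ≤ lam * (N : ℝ) ^ 2 * h) := by
  intro k
  refine ⟨hM.condCovariance_S_succ_I_succ k, ?_⟩
  have ⟨_, hh, hlam, _⟩ := hM
  filter_upwards [hM.condCovariance_S_succ_I_succ k] with ω hω
  have hS_le : (S k ω : ℝ) ≤ N := by exact_mod_cast hM.S_le k ω
  have hI_le : (I k ω : ℝ) ≤ N := by exact_mod_cast hM.I_le k ω
  rw [hω]
  calc _ ≤ S k ω * (lam * I k ω * h) :=
        abs_neg_mul_one_sub_exp_neg_mul_exp_neg_le (by positivity) (by positivity)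
    _ ≤ N * (lam * N * h) := by gcongr
    _ = lam * (N : ℝ) ^ 2 * h := by ring
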